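/- arXiv:2109.01030 — 3 statements merged into one kernel-verified Lean document; each statement's English description precedes it below -/
import Mathlib

section
/- Let f : ℝ → ℝ be a bounded probability density function (f ≥ 0, ∫_ℝ f = 1) with finite first and second moments, i.e. ∫_ℝ |x| f(x) dx < ∞ and ∫_ℝ x² f(x) dx < ∞. Then f is COS-admissible. -/
open MeasureTheory Real Filter

/-- `cosB f L` is the quantity `B(L)` from the definition of COS-admissibility. -/
noncomputable def cosB (f : ℝ → ℝ) (L : ℝ) : ℝ :=
  ∑' k : ℕ, (1 / L) *
    |∫ x in (Set.Icc (-L) L)ᶜ, f x * Real.cos (k * π * (x + L) / (2 * L))| ^ 2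

/-- `f` is COS-admissible if `B(L) → 0` as `L → ∞`. -/
def COSAdmissible (f : ℝ → ℝ) : Prop :=
  Tendsto (cosB f) atTop (nhds 0)

/-!
Let `g` be `f` with `[-L, L]` cut out, so that `B(L) = (1/L) Σₖ cₖ²` with
`cₖ = ∫ g(x) cos(kπ(x+L)/(2L)) dx`. All these cosines have period `4L` and are orthogonal on
every interval `Jₘ = [-L + 4Lm, 3L + 4Lm)`, so Bessel's inequality on `Jₘ` bounds
`Σₖ cₖ,ₘ²` by `4L ∫_{Jₘ} g²`, where `cₖ,ₘ` is the part of `cₖ` coming from `Jₘ`.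
Writing `cₖ = Σₘ cₖ,ₘ` and applying Cauchy–Schwarz with weights `1 + m²` gives
`Σₖ cₖ² ≤ 4L W Σₘ (1 + m²) ∫_{Jₘ} g²` with `W = Σₘ (1 + m²)⁻¹ < ∞`. Since `|x| ≥ |m| L` on `Jₘ`,
the right-hand side is at most `4L W ∫ (1 + x²/L²) g²`, and `g ≤ C`, `g = 0` on `[-L, L]` give
`B(L) ≤ 8 C W (∫ x² f) / L²`.
-/

open Set Finset Function

lemma summable_inv_one_add_sq_int : Summable fun m : ℤ => (1 + (m : ℝ) ^ 2)⁻¹ := by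
  refine Summable.of_norm_bounded_eventually
    (Real.summable_one_div_int_pow.mpr one_lt_two) ?_
  filter_upwards [eventually_cofinite_ne 0] with m hm
  have : (0 : ℝ) < (m : ℝ) ^ 2 := by positivity
  rw [norm_inv, Real.norm_of_nonneg (by positivity), one_div]
  exact inv_anti₀ this (by linarith)

theorem sq_tsum_le_tsum_inv_mul_tsum_mul_sq {ι : Type*} {a w : ι → ℝ} (hw : ∀ i, 0 < w i)
    (ha : Summable a) (hwi : Summable fun i => (w i)⁻¹) (hwa : Summable fun i => w i * a i ^ 2) :
    (∑' i, a i) ^ 2 ≤ (∑' i, (w i)⁻¹) * ∑' i, w i * a i ^ 2 := by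
  have hfin (s : Finset ι) :
      (∑ i ∈ s, a i) ^ 2 ≤ (∑ i ∈ s, (w i)⁻¹) * ∑ i ∈ s, w i * a i ^ 2 :=
    sum_sq_le_sum_mul_sum_of_sq_le_mul s (fun i _ => (inv_pos.2 (hw i)).le)
      (fun i _ => mul_nonneg (hw i).le (sq_nonneg _))
      (fun i _ => (inv_mul_cancel_left₀ (hw i).ne' _).ge)
  exact le_of_tendsto_of_tendsto' (ha.hasSum.pow 2) (Tendsto.mul hwi.hasSum hwa.hasSum) hfin

theorem sum_sq_integral_mul_div_le_integral_sq {ι α : Type*} [MeasurableSpace α] {μ : Measure α}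
    {g : α → ℝ} {e : ι → α → ℝ} (hg : Integrable (fun x => g x ^ 2) μ)
    (hge : ∀ k, Integrable (fun x => g x * e k x) μ)
    (hee : ∀ k j, Integrable (fun x => e k x * e j x) μ)
    (horth : Pairwise fun k j => ∫ x, e k x * e j x ∂μ = 0) (F : Finset ι) :
    ∑ k ∈ F, (∫ x, g x * e k x ∂μ) ^ 2 / ∫ x, e k x * e k x ∂μ ≤ ∫ x, g x ^ 2 ∂μ := by
  set c : ι → ℝ := fun k => ∫ x, g x * e k x ∂μ
  set n : ι → ℝ := fun k => ∫ x, e k x * e k x ∂μ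
  set s : α → ℝ := fun x => ∑ k ∈ F, c k / n k * e k x
  have hgs_eq : (fun x => g x * s x) = fun x => ∑ k ∈ F, c k / n k * (g x * e k x) := by
    ext x; simp only [s, Finset.mul_sum]; congr! 1; ring
  have hss_eq : (fun x => s x * s x) =
      fun x => ∑ k ∈ F, ∑ j ∈ F, c k / n k * (c j / n j) * (e k x * e j x) := by
    ext x; simp only [s, Finset.sum_mul_sum]; congr! 2; ring
  have hgs : Integrable (fun x => g x * s x) μ := by
    rw [hgs_eq]; exact integrable_finsetSum _ fun k _ => (hge k).const_mul _
  have hss : Integrable (fun x => s x * s x) μ := by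
    rw [hss_eq]
    exact integrable_finsetSum _ fun k _ => integrable_finsetSum _ fun j _ => (hee k j).const_mul _
  have hgs_val : ∫ x, g x * s x ∂μ = ∑ k ∈ F, c k ^ 2 / n k := by
    rw [hgs_eq, integral_finsetSum _ fun k _ => (hge k).const_mul _]
    congr! 1 with k
    rw [integral_const_mul]; ring
  have hss_val : ∫ x, s x * s x ∂μ = ∑ k ∈ F, c k ^ 2 / n k := by
    rw [hss_eq, integral_finsetSum _ fun k _ =>
      integrable_finsetSum _ fun j _ => (hee k j).const_mul _]
    congr! 1 with k hk
    rw [integral_finsetSum _ fun j _ => (hee k j).const_mul _, Finset.sum_eq_single k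
      (fun j _ hjk => by rw [integral_const_mul, horth (Ne.symm hjk), mul_zero])
      (fun hk' => absurd hk hk'), integral_const_mul]
    change c k / n k * (c k / n k) * n k = c k ^ 2 / n k
    generalize c k = a; generalize n k = b
    -- `b = 0` is allowed: both sides vanish since `x / 0 = 0`
    rcases eq_or_ne b 0 with rfl | hb
    · simp
    · field_simp
  have hnonneg : 0 ≤ ∫ x, (g x - s x) ^ 2 ∂μ := integral_nonneg fun x => sq_nonneg _
  have hexpand : ∫ x, (g x - s x) ^ 2 ∂μ
      = ∫ x, g x ^ 2 ∂μ - 2 * ∫ x, g x * s x ∂μ + ∫ x, s x * s x ∂μ := by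
    have hsq : (fun x => (g x - s x) ^ 2) = fun x => g x ^ 2 - 2 * (g x * s x) + s x * s x := by
      ext x; ring
    rw [hsq, integral_add (f := fun x => g x ^ 2 - 2 * (g x * s x)) (hg.sub (hgs.const_mul 2)) hss,
      integral_sub hg (hgs.const_mul 2), integral_const_mul]
  linarith

noncomputable def cosMode (L : ℝ) (k : ℕ) (x : ℝ) : ℝ := cos (k * π * (x + L) / (2 * L))

lemma continuous_cosMode (L : ℝ) (k : ℕ) : Continuous (cosMode L k) := by
  unfold cosMode; fun_prop

lemma abs_cosMode_le_one (L : ℝ) (k : ℕ) (x : ℝ) : |cosMode L k x| ≤ 1 := abs_cos_le_one _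

lemma MeasureTheory.Integrable.mul_cosMode {μ : Measure ℝ} {g : ℝ → ℝ} (hg : Integrable g μ)
    (L : ℝ) (k : ℕ) :
    Integrable (fun x => g x * cosMode L k x) μ :=
  hg.mul_bdd (continuous_cosMode L k).aestronglyMeasurable
    (ae_of_all _ fun x => abs_cosMode_le_one L k x)

lemma integral_cos_intCast_mul_period {L : ℝ} (hL : L ≠ 0) (n : ℤ) (a : ℝ) :
    ∫ x in a..a + 4 * L, cos (n * π * (x + L) / (2 * L)) = if n = 0 then 4 * L else 0 := by
  split_ifs with hn
  · simp [hn]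
  have hc : (n * π / (2 * L)) ≠ 0 := by
    have : (n : ℝ) ≠ 0 := Int.cast_ne_zero.2 hn
    positivity
  have hlin : ∀ x, n * π * (x + L) / (2 * L) = n * π / (2 * L) * x + n * π / 2 := by
    intro x; field_simp
  have hend : n * π / (2 * L) * (a + 4 * L) + n * π / 2
      = (n * π / (2 * L) * a + n * π / 2) + n * (2 * π) := by
    field_simp; ring
  simp_rw [hlin]
  rw [intervalIntegral.integral_comp_mul_add cos hc, integral_cos, hend, sin_add_int_mul_two_pi,
    sub_self, smul_zero]

lemma integral_cosMode_mul_cosMode {L : ℝ} (hL : L ≠ 0) (k j : ℕ) (a : ℝ) :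
    ∫ x in a..a + 4 * L, cosMode L k x * cosMode L j x =
      if k = j then (if k = 0 then 4 * L else 2 * L) else 0 := by
  have hprod : ∀ x, cosMode L k x * cosMode L j x =
      (1 / 2) * cos (((k + j : ℤ) : ℝ) * π * (x + L) / (2 * L)) +
        (1 / 2) * cos (((k - j : ℤ) : ℝ) * π * (x + L) / (2 * L)) := by
    intro x
    simp only [cosMode, Int.cast_add, Int.cast_sub, Int.cast_natCast, add_mul, sub_mul, add_div,
      sub_div, cos_add, cos_sub]
    ring
  have hint : ∀ n : ℤ, IntervalIntegrable (fun x => (1 / 2) * cos (n * π * (x + L) / (2 * L)))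
      volume a (a + 4 * L) := fun n => (by fun_prop : Continuous _).intervalIntegrable _ _
  simp_rw [hprod]
  rw [intervalIntegral.integral_add (hint _) (hint _), intervalIntegral.integral_const_mul,
    intervalIntegral.integral_const_mul, integral_cos_intCast_mul_period hL,
    integral_cos_intCast_mul_period hL]
  by_cases hkj : k = j
  · subst hkj
    have hkk : (k + k : ℤ) = 0 ↔ k = 0 := by omega
    simp only [hkk, sub_self, if_true]
    split_ifs <;> ring
  · have h1 : (k + j : ℤ) ≠ 0 := by omega
    have h2 : (k - j : ℤ) ≠ 0 := by omega
    simp [hkj, h1, h2]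

/-- `[-L + 4Lm, 3L + 4Lm)`: one full period of every `cosMode L k`; for `L > 0` these tile `ℝ`. -/
def cosBlock (L : ℝ) (m : ℤ) : Set ℝ := Ico (-L + m • (4 * L)) (-L + (m + 1) • (4 * L))

lemma pairwise_disjoint_cosBlock (L : ℝ) : Pairwise (Disjoint on cosBlock L) :=
  pairwise_disjoint_Ico_add_zsmul _ _

lemma iUnion_cosBlock {L : ℝ} (hL : 0 < L) : ⋃ m, cosBlock L m = univ :=
  iUnion_Ico_add_zsmul (by positivity) _

lemma hasSum_setIntegral_cosBlock {L : ℝ} (hL : 0 < L) {h : ℝ → ℝ} (hh : Integrable h) :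
    HasSum (fun m => ∫ x in cosBlock L m, h x) (∫ x, h x) := by
  have hsum := hasSum_integral_iUnion (s := cosBlock L) (fun m => measurableSet_Ico)
    (pairwise_disjoint_cosBlock L) hh.integrableOn
  rwa [iUnion_cosBlock hL, setIntegral_univ] at hsum

lemma setIntegral_cosBlock_eq_intervalIntegral {L : ℝ} (hL : 0 ≤ L) (m : ℤ) (h : ℝ → ℝ) :
    ∫ x in cosBlock L m, h x = ∫ x in -L + m • (4 * L)..-L + m • (4 * L) + 4 * L, h x := by
  rw [intervalIntegral.integral_of_le (by linarith), cosBlock, integral_Ico_eq_integral_Ioc,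
    add_one_zsmul, add_assoc]

lemma abs_mul_le_abs_of_mem_cosBlock {L : ℝ} {m : ℤ} {x : ℝ}
    (hx : x ∈ cosBlock L m) : |(m : ℝ)| * L ≤ |x| := by
  obtain ⟨h1, h2⟩ := hx
  simp only [zsmul_eq_mul, Int.cast_add, Int.cast_one] at h1 h2
  rcases lt_trichotomy m 0 with hm | rfl | hm
  · have hm' : (m : ℝ) ≤ -1 := by exact_mod_cast Int.le_sub_one_of_lt hm
    rw [abs_of_neg (by linarith)]
    nlinarith [neg_le_abs x]
  · simp
  · have hm' : (1 : ℝ) ≤ m := by exact_mod_cast hm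
    rw [abs_of_pos (by linarith)]
    nlinarith [le_abs_self x]

lemma sum_sq_setIntegral_cosBlock_mul_cosMode_le {L : ℝ} (hL : 0 < L) (m : ℤ) {g : ℝ → ℝ}
    (hg : IntegrableOn g (cosBlock L m)) (hg2 : IntegrableOn (fun x => g x ^ 2) (cosBlock L m))
    (F : Finset ℕ) :
    ∑ k ∈ F, (∫ x in cosBlock L m, g x * cosMode L k x) ^ 2 ≤
      4 * L * ∫ x in cosBlock L m, g x ^ 2 := by
  have horth (k j : ℕ) : ∫ x in cosBlock L m, cosMode L k x * cosMode L j x =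
      if k = j then (if k = 0 then 4 * L else 2 * L) else 0 := by
    rw [setIntegral_cosBlock_eq_intervalIntegral hL.le, integral_cosMode_mul_cosMode hL.ne']
  have hnorm (k : ℕ) : 0 < ∫ x in cosBlock L m, cosMode L k x * cosMode L k x ∧
      ∫ x in cosBlock L m, cosMode L k x * cosMode L k x ≤ 4 * L := by
    rw [horth, if_pos rfl]; split_ifs <;> constructor <;> linarith
  have hbessel := sum_sq_integral_mul_div_le_integral_sq hg2
    (fun k => hg.mul_cosMode L k) (fun k j =>
      ((continuous_cosMode L k).mul (continuous_cosMode L j)).integrableOn_Icc.mono_set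
        Ico_subset_Icc_self)
    (fun k j hkj => (horth k j).trans (if_neg hkj)) F
  calc ∑ k ∈ F, (∫ x in cosBlock L m, g x * cosMode L k x) ^ 2
      ≤ ∑ k ∈ F, 4 * L * ((∫ x in cosBlock L m, g x * cosMode L k x) ^ 2 /
          ∫ x in cosBlock L m, cosMode L k x * cosMode L k x) := by
        gcongr with k
        rw [← mul_div_assoc, le_div_iff₀ (hnorm k).1, mul_comm (4 * L)]
        exact mul_le_mul_of_nonneg_left (hnorm k).2 (sq_nonneg _)
    _ ≤ 4 * L * ∫ x in cosBlock L m, g x ^ 2 := by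
        rw [← Finset.mul_sum]; gcongr

lemma one_add_sq_mul_setIntegral_cosBlock_le {L : ℝ} (hL : 0 < L) (m : ℤ) {h : ℝ → ℝ}
    (hh0 : ∀ x, 0 ≤ h x) (hh : Integrable h) (hxh : Integrable fun x => x ^ 2 * h x) :
    (1 + (m : ℝ) ^ 2) * ∫ x in cosBlock L m, h x ≤
      (∫ x in cosBlock L m, h x) + (∫ x in cosBlock L m, x ^ 2 * h x) / L ^ 2 := by
  rw [add_mul, one_mul, ← integral_const_mul, ← integral_div]
  refine add_le_add_right ?_ _
  refine setIntegral_mono_on (hh.const_mul _).integrableOn (hxh.div_const _).integrableOn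
    measurableSet_Ico fun x hx => ?_
  have hmx : (m : ℝ) ^ 2 * L ^ 2 ≤ x ^ 2 := by
    have := pow_le_pow_left₀ (by positivity) (abs_mul_le_abs_of_mem_cosBlock hx) 2
    rwa [mul_pow, sq_abs, sq_abs] at this
  rw [le_div_iff₀ (by positivity), mul_right_comm]
  exact mul_le_mul_of_nonneg_right hmx (hh0 x)

lemma summable_one_add_sq_mul_setIntegral_cosBlock {L : ℝ} (hL : 0 < L) {h : ℝ → ℝ}
    (hh0 : ∀ x, 0 ≤ h x) (hh : Integrable h) (hxh : Integrable fun x => x ^ 2 * h x) :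
    Summable fun m : ℤ => (1 + (m : ℝ) ^ 2) * ∫ x in cosBlock L m, h x :=
  .of_nonneg_of_le (fun m => mul_nonneg (by positivity) (setIntegral_nonneg measurableSet_Ico
      fun x _ => hh0 x))
    (fun m => one_add_sq_mul_setIntegral_cosBlock_le hL m hh0 hh hxh)
    ((hasSum_setIntegral_cosBlock hL hh).add
      ((hasSum_setIntegral_cosBlock hL hxh).div_const (L ^ 2))).summable

lemma tsum_one_add_sq_mul_setIntegral_cosBlock_le {L : ℝ} (hL : 0 < L) {h : ℝ → ℝ}
    (hh0 : ∀ x, 0 ≤ h x) (hh : Integrable h) (hxh : Integrable fun x => x ^ 2 * h x) :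
    ∑' m : ℤ, (1 + (m : ℝ) ^ 2) * ∫ x in cosBlock L m, h x ≤
      (∫ x, h x) + (∫ x, x ^ 2 * h x) / L ^ 2 :=
  hasSum_le (fun m => one_add_sq_mul_setIntegral_cosBlock_le hL m hh0 hh hxh)
    (summable_one_add_sq_mul_setIntegral_cosBlock hL hh0 hh hxh).hasSum
    ((hasSum_setIntegral_cosBlock hL hh).add
      ((hasSum_setIntegral_cosBlock hL hxh).div_const (L ^ 2)))

theorem sum_sq_integral_mul_cosMode_le {L : ℝ} (hL : 0 < L) {g : ℝ → ℝ} (hg : Integrable g)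
    (hg2 : Integrable fun x => g x ^ 2) (hxg2 : Integrable fun x => x ^ 2 * g x ^ 2)
    (F : Finset ℕ) :
    ∑ k ∈ F, (∫ x, g x * cosMode L k x) ^ 2 ≤
      4 * L * (∑' m : ℤ, (1 + (m : ℝ) ^ 2)⁻¹) *
        ((∫ x, g x ^ 2) + (∫ x, x ^ 2 * g x ^ 2) / L ^ 2) := by
  set W := ∑' m : ℤ, (1 + (m : ℝ) ^ 2)⁻¹
  set c : ℤ → ℕ → ℝ := fun m k => ∫ x in cosBlock L m, g x * cosMode L k x
  set T : ℤ → ℝ := fun m => ∫ x in cosBlock L m, g x ^ 2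
  have hsplit (k : ℕ) : HasSum (c · k) (∫ x, g x * cosMode L k x) :=
    hasSum_setIntegral_cosBlock hL (hg.mul_cosMode L k)
  have hbessel (m : ℤ) (F' : Finset ℕ) : ∑ k ∈ F', c m k ^ 2 ≤ 4 * L * T m :=
    sum_sq_setIntegral_cosBlock_mul_cosMode_le hL m hg.integrableOn hg2.integrableOn F'
  have hwT := summable_one_add_sq_mul_setIntegral_cosBlock hL (fun x => sq_nonneg (g x)) hg2 hxg2
  have hwc (k : ℕ) : Summable fun m : ℤ => (1 + (m : ℝ) ^ 2) * c m k ^ 2 :=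
    .of_nonneg_of_le (fun m => by positivity)
      (fun m => by
        rw [mul_left_comm]
        gcongr
        simpa only [Finset.sum_singleton] using hbessel m {k})
      (hwT.mul_left (4 * L))
  have hcs (k : ℕ) : (∫ x, g x * cosMode L k x) ^ 2 ≤
      W * ∑' m : ℤ, (1 + (m : ℝ) ^ 2) * c m k ^ 2 := by
    rw [← (hsplit k).tsum_eq]
    exact sq_tsum_le_tsum_inv_mul_tsum_mul_sq (fun m => by positivity) (hsplit k).summable
      summable_inv_one_add_sq_int (hwc k)
  calc ∑ k ∈ F, (∫ x, g x * cosMode L k x) ^ 2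
      ≤ ∑ k ∈ F, W * ∑' m : ℤ, (1 + (m : ℝ) ^ 2) * c m k ^ 2 := Finset.sum_le_sum fun k _ => hcs k
    _ = W * ∑' m : ℤ, (1 + (m : ℝ) ^ 2) * ∑ k ∈ F, c m k ^ 2 := by
        rw [← Finset.mul_sum, ← Summable.tsum_finsetSum fun k _ => hwc k]
        simp_rw [Finset.mul_sum]
    _ ≤ W * ∑' m : ℤ, (1 + (m : ℝ) ^ 2) * (4 * L * T m) := by
        gcongr with m
        · simpa only [Finset.mul_sum] using summable_sum fun k _ => hwc k
        · simpa only [mul_left_comm _ (4 * L)] using hwT.mul_left (4 * L)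
        · exact hbessel m F
    _ = 4 * L * W * ∑' m : ℤ, (1 + (m : ℝ) ^ 2) * T m := by
        simp_rw [mul_left_comm _ (4 * L)]; rw [tsum_mul_left]; ring
    _ ≤ 4 * L * W * ((∫ x, g x ^ 2) + (∫ x, x ^ 2 * g x ^ 2) / L ^ 2) := by
        gcongr
        exact tsum_one_add_sq_mul_setIntegral_cosBlock_le hL (fun x => sq_nonneg (g x)) hg2 hxg2

lemma sq_mul_sq_indicator_le {f : ℝ → ℝ} {C : ℝ} (hbdd : ∀ x, f x ≤ C) (hnonneg : ∀ x, 0 ≤ f x)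
    (s : Set ℝ) (x : ℝ) : x ^ 2 * s.indicator f x ^ 2 ≤ C * (x ^ 2 * f x) := by
  by_cases hx : x ∈ s
  · rw [indicator_of_mem hx, mul_left_comm, sq (f x)]
    exact mul_le_mul_of_nonneg_left (mul_le_mul_of_nonneg_right (hbdd x) (hnonneg x))
      (sq_nonneg x)
  · have hC : 0 ≤ C := (hnonneg 0).trans (hbdd 0)
    rw [indicator_of_notMem hx, zero_pow two_ne_zero, mul_zero]
    exact mul_nonneg hC (mul_nonneg (sq_nonneg x) (hnonneg x))

lemma sq_mul_sq_indicator_compl_Icc_le {L : ℝ} (hL : 0 ≤ L) (φ : ℝ → ℝ) (x : ℝ) :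
    L ^ 2 * (Icc (-L) L)ᶜ.indicator φ x ^ 2 ≤ x ^ 2 * (Icc (-L) L)ᶜ.indicator φ x ^ 2 := by
  by_cases hx : x ∈ (Icc (-L) L)ᶜ
  · have hLx : L ^ 2 ≤ x ^ 2 := by
      simp only [mem_compl_iff, Set.mem_Icc, not_and_or, not_le] at hx
      rcases hx with hx | hx <;> nlinarith
    gcongr
  · simp [indicator_of_notMem hx]

lemma cosB_eq_tsum_indicator (f : ℝ → ℝ) (L : ℝ) :
    cosB f L = ∑' k : ℕ, 1 / L * (∫ x, (Icc (-L) L)ᶜ.indicator f x * cosMode L k x) ^ 2 := by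
  simp_rw [cosB, sq_abs, ← indicator_mul_left, integral_indicator measurableSet_Icc.compl]
  rfl

lemma cosB_le {f : ℝ → ℝ} {C L : ℝ} (hL : 0 < L) (hbdd : ∀ x, f x ≤ C)
    (hnonneg : ∀ x, 0 ≤ f x) (hint : Integrable f) (hmom2 : Integrable fun x => x ^ 2 * f x) :
    cosB f L ≤ 8 * C * (∑' m : ℤ, (1 + (m : ℝ) ^ 2)⁻¹) * (∫ x, x ^ 2 * f x) / L ^ 2 := by
  set g := (Icc (-L) L)ᶜ.indicator f
  set M := ∫ x, x ^ 2 * f x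
  set W := ∑' m : ℤ, (1 + (m : ℝ) ^ 2)⁻¹
  have hW : 0 ≤ W := tsum_nonneg fun m => by positivity
  have hg : Integrable g := hint.indicator measurableSet_Icc.compl
  have hxg_sq := sq_mul_sq_indicator_le hbdd hnonneg (Icc (-L) L)ᶜ
  have hg_sq (x : ℝ) : g x ^ 2 ≤ C * (x ^ 2 * f x) / L ^ 2 := by
    rw [le_div_iff₀ (by positivity), mul_comm]
    exact (sq_mul_sq_indicator_compl_Icc_le hL.le f x).trans (hxg_sq x)
  have hg2 : Integrable fun x => g x ^ 2 :=
    ((hmom2.const_mul C).div_const _).mono' (hg.aestronglyMeasurable.pow 2)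
      (ae_of_all _ fun x => by rw [Real.norm_of_nonneg (sq_nonneg _)]; exact hg_sq x)
  have hxg2 : Integrable fun x => x ^ 2 * g x ^ 2 :=
    (hmom2.const_mul C).mono'
      ((continuous_pow 2).aestronglyMeasurable.mul (hg.aestronglyMeasurable.pow 2))
      (ae_of_all _ fun x => by rw [Real.norm_of_nonneg (by positivity)]; exact hxg_sq x)
  have hg2_le : ∫ x, g x ^ 2 ≤ C * M / L ^ 2 := by
    rw [← integral_const_mul, ← integral_div]
    exact integral_mono hg2 ((hmom2.const_mul C).div_const _) hg_sq
  have hxg2_le : ∫ x, x ^ 2 * g x ^ 2 ≤ C * M := by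
    rw [← integral_const_mul]
    exact integral_mono hxg2 (hmom2.const_mul C) hxg_sq
  rw [cosB_eq_tsum_indicator]
  refine Real.tsum_le_of_sum_le (fun k => by positivity) fun F => ?_
  calc ∑ k ∈ F, 1 / L * (∫ x, g x * cosMode L k x) ^ 2
      ≤ 1 / L * (4 * L * W * ((∫ x, g x ^ 2) + (∫ x, x ^ 2 * g x ^ 2) / L ^ 2)) := by
        rw [← Finset.mul_sum]
        gcongr
        exact sum_sq_integral_mul_cosMode_le hL hg hg2 hxg2 F
    _ ≤ 1 / L * (4 * L * W * (C * M / L ^ 2 + C * M / L ^ 2)) := by gcongr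
    _ = 8 * C * W * M / L ^ 2 := by field_simp; ring

theorem stmt_1_general (f : ℝ → ℝ) (C : ℝ)
    (hbdd : ∀ x, f x ≤ C)                     -- `f` is bounded
    (hnonneg : ∀ x, 0 ≤ f x)                  -- `f` is a probability density:
    (hint : Integrable f)
    (hmom2 : Integrable (fun x => x ^ 2 * f x)) -- finite second moment
    : COSAdmissible f := by
  have hbound : Tendsto (fun L : ℝ =>
      8 * C * (∑' m : ℤ, (1 + (m : ℝ) ^ 2)⁻¹) * (∫ x, x ^ 2 * f x) / L ^ 2) atTop (nhds 0) :=
    tendsto_const_nhds.div_atTop (tendsto_pow_atTop two_ne_zero)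
  refine squeeze_zero' ?_ ?_ hbound
  · filter_upwards [eventually_gt_atTop 0] with L hL
    exact tsum_nonneg fun k => by positivity
  · filter_upwards [eventually_gt_atTop 0] with L hL
    exact cosB_le hL hbdd hnonneg hint hmom2

theorem stmt_1 (f : ℝ → ℝ) (C : ℝ)
    (hbdd : ∀ x, f x ≤ C)                     -- `f` is bounded
    (hnonneg : ∀ x, 0 ≤ f x)                  -- `f` is a probability density:
    (hint : Integrable f)
    (hone : ∫ x, f x = 1)
    (hmom1 : Integrable (fun x => |x| * f x)) -- finite first moment
    (hmom2 : Integrable (fun x => x ^ 2 * f x)) -- finite second moment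
    : COSAdmissible f :=
  stmt_1_general f C hbdd hnonneg hint hmom2
end

section
/- For parameters c > 0 and μ ∈ ℝ, the Cauchy density f(x) = c/(π(c² + (x−μ)²)) is COS-admissible. -/
/-!
Integrating by parts against `sin (ω x + θ) / ω` with `ω = kπ/(2L)`, the `k`-th integral in
`B(L)` of a function with monotone tails is at most `2 (|f L| + |f (-L)|) / ω`, that is
`O(L (|f L| + |f (-L)|) / k)`, while the `0`-th one is at most `‖f‖₁`. Summing the squares against
`∑ 1/(k+1)² = π²/6` gives `B(L) ≲ ‖f‖₁² / L + L (f L ² + f (-L) ²)`, which tends to `0` once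
`x f(x)² → 0` at `±∞`. The Cauchy density is integrable, unimodal and decays like `x⁻²`.
-/

open MeasureTheory Real Filter

open Set Topology Bornology IsOrderBornology

section CosineTail

variable {g g' : ℝ → ℝ} {L ω θ : ℝ}

theorem abs_integral_Ioi_mul_cos_le (hg : ∀ x ∈ Ici L, HasDerivAt g (g' x) x)
    (hg'int : IntegrableOn g' (Ioi L)) (hgint : IntegrableOn g (Ioi L)) (hω : 0 < ω) :
    |∫ x in Ioi L, g x * cos (ω * x + θ)| ≤ (|g L| + ∫ x in Ioi L, |g' x|) / ω := by
  set v : ℝ → ℝ := fun x => sin (ω * x + θ) / ω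
  have hv : ∀ x, HasDerivAt v (cos (ω * x + θ)) x := fun x => by
    simpa [v, hω.ne'] using (((hasDerivAt_id x).const_mul ω).add_const θ).sin.div_const ω
  have hv_le : ∀ x, ‖v x‖ ≤ ω⁻¹ := fun x => by
    simpa [v, abs_div, abs_of_pos hω, div_eq_mul_inv] using
      mul_le_mul_of_nonneg_right (abs_sin_le_one (ω * x + θ)) (inv_nonneg.2 hω.le)
  have hv_cont : Continuous v := by fun_prop
  have hlim : Tendsto g atTop (𝓝 0) :=
    tendsto_zero_of_hasDerivAt_of_integrableOn_Ioi (fun x hx => hg x (Ioi_subset_Ici_self hx))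
      hg'int hgint
  have hparts := integral_Ioi_mul_deriv_eq_deriv_mul (fun x hx => hg x (Ioi_subset_Ici_self hx))
    (fun x _ => hv x)
    (hgint.mul_bdd (by fun_prop) (ae_of_all _ fun x => by simpa using abs_cos_le_one (ω * x + θ)))
    (hg'int.mul_bdd hv_cont.aestronglyMeasurable (ae_of_all _ hv_le))
    (((hg L self_mem_Ici).continuousAt.mul hv_cont.continuousAt).tendsto.mono_left
      nhdsWithin_le_nhds)
    (hlim.zero_mul_isBoundedUnder_le ⟨ω⁻¹, eventually_map.2 (Eventually.of_forall hv_le)⟩)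
  have hrest : |∫ x in Ioi L, g' x * v x| ≤ (∫ x in Ioi L, |g' x|) / ω := by
    rw [← Real.norm_eq_abs, div_eq_mul_inv, ← integral_mul_const]
    refine norm_integral_le_of_norm_le (hg'int.norm.mul_const _) (ae_of_all _ fun x => ?_)
    rw [norm_mul]
    exact mul_le_mul_of_nonneg_left (hv_le x) (norm_nonneg _)
  have hboundary : |g L * v L| ≤ |g L| / ω := by
    rw [div_eq_mul_inv, abs_mul]
    exact mul_le_mul_of_nonneg_left (hv_le L) (abs_nonneg _)
  rw [hparts, zero_sub, sub_eq_add_neg, ← neg_add, abs_neg, add_div]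
  exact (abs_add_le _ _).trans (add_le_add hboundary hrest)

theorem abs_integral_Ioi_mul_cos_le_of_deriv_nonpos (hg : ∀ x ∈ Ici L, HasDerivAt g (g' x) x)
    (hg' : ∀ x ∈ Ioi L, g' x ≤ 0) (hgint : IntegrableOn g (Ioi L))
    (hlim : Tendsto g atTop (𝓝 0)) (hω : 0 < ω) :
    |∫ x in Ioi L, g x * cos (ω * x + θ)| ≤ 2 * |g L| / ω := by
  have hvar : ∫ x in Ioi L, |g' x| = g L := by
    rw [setIntegral_congr_fun measurableSet_Ioi fun x hx => abs_of_nonpos (hg' x hx),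
      integral_neg, integral_Ioi_of_hasDerivAt_of_nonpos' hg hg' hlim, zero_sub, neg_neg]
  calc _ ≤ (|g L| + ∫ x in Ioi L, |g' x|) / ω :=
        abs_integral_Ioi_mul_cos_le hg (integrableOn_Ioi_deriv_of_nonpos' hg hg' hlim) hgint hω
    _ ≤ 2 * |g L| / ω := by
        rw [hvar, two_mul]
        gcongr
        exact le_abs_self _

end CosineTail

theorem integral_Iio_neg_eq_integral_Ioi_comp_neg (L : ℝ) (f : ℝ → ℝ) :
    ∫ x in Iio (-L), f x = ∫ x in Ioi L, f (-x) := by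
  rw [← integral_Iic_eq_integral_Iio, integral_comp_neg_Ioi]

theorem abs_integral_compl_Icc_mul_cos_le {f f' : ℝ → ℝ} {a L ω θ : ℝ} (hf : Integrable f)
    (hderiv : ∀ x, a ≤ |x| → HasDerivAt f (f' x) x) (hright : ∀ x, a ≤ x → f' x ≤ 0)
    (hleft : ∀ x, x ≤ -a → 0 ≤ f' x) (htop : Tendsto f atTop (𝓝 0))
    (hbot : Tendsto f atBot (𝓝 0)) (haL : a ≤ L) (hL : 0 ≤ L) (hω : 0 < ω) :
    |∫ x in (Icc (-L) L)ᶜ, f x * cos (ω * x + θ)| ≤ 2 * (|f L| + |f (-L)|) / ω := by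
  have hint : Integrable fun x => f x * cos (ω * x + θ) :=
    hf.mul_bdd (by fun_prop) (ae_of_all _ fun x => by simpa using abs_cos_le_one (ω * x + θ))
  have hIoi := abs_integral_Ioi_mul_cos_le_of_deriv_nonpos (L := L) (θ := θ)
    (fun x hx => hderiv x (haL.trans (hx.out.trans (le_abs_self x))))
    (fun x hx => hright x (haL.trans hx.out.le)) hf.integrableOn htop hω
  have hIio := abs_integral_Ioi_mul_cos_le_of_deriv_nonpos (g := fun x => f (-x)) (L := L)
    (θ := -θ)
    (fun x hx => by
      have hax : a ≤ |-x| := abs_neg x ▸ haL.trans (hx.out.trans (le_abs_self x))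
      simpa [Function.comp_def] using (hderiv (-x) hax).comp x (hasDerivAt_neg x))
    (fun x hx => by simpa using hleft (-x) (by linarith [hx.out]))
    hf.comp_neg.integrableOn (hbot.comp tendsto_neg_atTop_atBot) hω
  have hcompl : (Icc (-L) L)ᶜ = Iio (-L) ∪ Ioi L := by
    ext x
    simp only [mem_compl_iff, mem_Icc, not_and_or, not_le, mem_union, mem_Iio, mem_Ioi]
  have hdisj : Disjoint (Iio (-L)) (Ioi L) :=
    (Iic_disjoint_Ioi (by linarith)).mono_left Iio_subset_Iic_self
  rw [hcompl, setIntegral_union hdisj measurableSet_Ioi hint.integrableOn hint.integrableOn,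
    integral_Iio_neg_eq_integral_Ioi_comp_neg]
  have hcos : ∀ x, cos (ω * -x + θ) = cos (ω * x + -θ) := fun x => by
    rw [← cos_neg]; ring_nf
  simp only [hcos]
  calc _ ≤ _ := abs_add_le _ _
    _ ≤ 2 * |f (-L)| / ω + 2 * |f L| / ω := add_le_add hIio hIoi
    _ = _ := by ring

noncomputable def cosTailCoeff (f : ℝ → ℝ) (L : ℝ) (k : ℕ) : ℝ :=
  ∫ x in (Icc (-L) L)ᶜ, f x * cos (k * π * (x + L) / (2 * L))

theorem hasSum_one_div_nat_add_one_sq :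
    HasSum (fun k : ℕ => 1 / ((k : ℝ) + 1) ^ 2) (π ^ 2 / 6) := by
  simpa using (hasSum_nat_add_iff' 1).2 hasSum_zeta_two

theorem cosB_le_of_abs_cosTailCoeff_le {f : ℝ → ℝ} {L C : ℝ} (hL : 0 < L)
    (h : ∀ k : ℕ, |cosTailCoeff f L k| ≤ C / (k + 1)) : cosB f L ≤ π ^ 2 / 6 * (C ^ 2 / L) := by
  have hterm : ∀ k : ℕ, 1 / L * |cosTailCoeff f L k| ^ 2 ≤ C ^ 2 / L * (1 / ((k : ℝ) + 1) ^ 2) :=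
    fun k => by
      calc 1 / L * |cosTailCoeff f L k| ^ 2 ≤ 1 / L * (C / (k + 1)) ^ 2 := by
            gcongr
            exact h k
        _ = C ^ 2 / L * (1 / ((k : ℝ) + 1) ^ 2) := by field_simp
  have hsum := hasSum_one_div_nat_add_one_sq.mul_left (C ^ 2 / L)
  calc cosB f L ≤ C ^ 2 / L * (π ^ 2 / 6) :=
        (hsum.summable.of_nonneg_of_le (fun k => by positivity) hterm).tsum_le_tsum hterm
          hsum.summable |>.trans_eq hsum.tsum_eq
    _ = π ^ 2 / 6 * (C ^ 2 / L) := mul_comm _ _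

theorem abs_cosTailCoeff_le {f f' : ℝ → ℝ} {a L : ℝ} (hf : Integrable f)
    (hderiv : ∀ x, a ≤ |x| → HasDerivAt f (f' x) x) (hright : ∀ x, a ≤ x → f' x ≤ 0)
    (hleft : ∀ x, x ≤ -a → 0 ≤ f' x) (htop : Tendsto f atTop (𝓝 0))
    (hbot : Tendsto f atBot (𝓝 0)) (haL : a ≤ L) (hL : 0 < L) (k : ℕ) :
    |cosTailCoeff f L k| ≤ ((∫ x, |f x|) + 4 * L * (|f L| + |f (-L)|)) / (k + 1) := by
  have hM : 0 ≤ ∫ x, |f x| := integral_nonneg fun x => abs_nonneg _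
  rcases Nat.eq_zero_or_pos k with rfl | hk
  · have h0 : |cosTailCoeff f L 0| ≤ ∫ x, |f x| := by
      simp only [cosTailCoeff, CharP.cast_eq_zero, zero_mul, zero_div, cos_zero, mul_one]
      exact abs_integral_le_integral_abs.trans
        (setIntegral_le_integral hf.abs (ae_of_all _ fun x => abs_nonneg _))
    simp only [CharP.cast_eq_zero, zero_add, div_one]
    exact h0.trans (le_add_of_nonneg_right (by positivity))
  · set ω := k * π / (2 * L) with hω_def
    have hω : 0 < ω := by positivity
    have hcoeff : cosTailCoeff f L k = ∫ x in (Icc (-L) L)ᶜ, f x * cos (ω * x + k * π / 2) := by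
      unfold cosTailCoeff
      congr with x
      rw [hω_def]
      field_simp
    have hk1 : (k : ℝ) + 1 ≤ k * π := by
      have : (1 : ℝ) ≤ k := by exact_mod_cast hk
      nlinarith [pi_gt_three]
    calc |cosTailCoeff f L k| ≤ 2 * (|f L| + |f (-L)|) / ω :=
          hcoeff ▸ abs_integral_compl_Icc_mul_cos_le hf hderiv hright hleft htop hbot haL hL.le hω
      _ = 4 * L * (|f L| + |f (-L)|) / (k * π) := by
          rw [hω_def]
          field_simp
          ring
      _ ≤ 4 * L * (|f L| + |f (-L)|) / (k + 1) := by gcongr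
      _ ≤ _ := by gcongr; exact le_add_of_nonneg_left hM

theorem tendsto_zero_of_tendsto_mul_sq {f : ℝ → ℝ}
    (h : Tendsto (fun x => x * f x ^ 2) (cobounded ℝ) (𝓝 0)) : Tendsto f (cobounded ℝ) (𝓝 0) := by
  have hsq : Tendsto (fun x => f x ^ 2) (cobounded ℝ) (𝓝 0) := by
    refine (zero_mul (0 : ℝ) ▸ h.mul tendsto_inv₀_cobounded).congr' ?_
    filter_upwards [eventually_ne_cobounded 0] with x hx
    field_simp
  refine (tendsto_zero_iff_abs_tendsto_zero f).2 ?_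
  simpa only [Function.comp_def, Real.sqrt_sq_eq_abs, Real.sqrt_zero] using hsq.sqrt

theorem cosAdmissible_of_deriv_sign {f f' : ℝ → ℝ} (a : ℝ) (hf : Integrable f)
    (hderiv : ∀ x, a ≤ |x| → HasDerivAt f (f' x) x) (hright : ∀ x, a ≤ x → f' x ≤ 0)
    (hleft : ∀ x, x ≤ -a → 0 ≤ f' x)
    (hdecay : Tendsto (fun x => x * f x ^ 2) (cobounded ℝ) (𝓝 0)) : COSAdmissible f := by
  have hf0 := tendsto_zero_of_tendsto_mul_sq hdecay
  set M := ∫ x, |f x|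
  have hbound : ∀ᶠ L in atTop,
      cosB f L ≤ π ^ 2 / 6 * (2 * M ^ 2 / L + 64 * (L * f L ^ 2 + L * f (-L) ^ 2)) := by
    filter_upwards [eventually_ge_atTop a, eventually_gt_atTop 0] with L haL hL
    refine (cosB_le_of_abs_cosTailCoeff_le hL (abs_cosTailCoeff_le hf hderiv hright hleft
      (hf0.mono_left atTop_le_cobounded) (hf0.mono_left atBot_le_cobounded) haL hL)).trans ?_
    gcongr
    have hs : (|f L| + |f (-L)|) ^ 2 ≤ 2 * (f L ^ 2 + f (-L) ^ 2) := by
      nlinarith [sq_nonneg (|f L| - |f (-L)|), sq_abs (f L), sq_abs (f (-L))]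
    rw [div_add' _ _ _ hL.ne', div_le_div_iff_of_pos_right hL]
    nlinarith [sq_nonneg (M - 4 * L * (|f L| + |f (-L)|)),
      mul_le_mul_of_nonneg_left hs (sq_nonneg L)]
  have hlim : Tendsto (fun L => π ^ 2 / 6 * (2 * M ^ 2 / L + 64 * (L * f L ^ 2 + L * f (-L) ^ 2)))
      atTop (𝓝 0) := by
    have hR := hdecay.mono_left atTop_le_cobounded
    have hL := (hdecay.mono_left atBot_le_cobounded).comp tendsto_neg_atTop_atBot
    simpa [Function.comp_def] using
      (((tendsto_const_nhds (x := 2 * M ^ 2)).div_atTop tendsto_id).add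
        ((hR.sub hL).const_mul 64)).const_mul (π ^ 2 / 6)
  refine squeeze_zero' ?_ hbound hlim
  filter_upwards [eventually_gt_atTop 0] with L hL
  exact tsum_nonneg fun k => by positivity

namespace ProbabilityTheory

open scoped NNReal

theorem hasDerivAt_cauchyPDFReal (x₀ : ℝ) (γ : ℝ≥0) {x : ℝ} (hx : x ≠ x₀) :
    HasDerivAt (cauchyPDFReal x₀ γ)
      (π⁻¹ * γ * (-(2 * (x - x₀)) / ((x - x₀) ^ 2 + γ ^ 2) ^ 2)) x := by
  have hpos : 0 < (x - x₀) ^ 2 + (γ : ℝ) ^ 2 := by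
    have := sub_ne_zero.2 hx
    positivity
  have hq : HasDerivAt (fun x => (x - x₀) ^ 2 + (γ : ℝ) ^ 2) (2 * (x - x₀)) x := by
    simpa using (((hasDerivAt_id x).sub_const x₀).pow 2).add_const ((γ : ℝ) ^ 2)
  exact (hq.inv hpos.ne').const_mul (π⁻¹ * γ)

theorem tendsto_mul_cauchyPDFReal_sq_cobounded (x₀ : ℝ) (γ : ℝ≥0) :
    Tendsto (fun x => x * cauchyPDFReal x₀ γ x ^ 2) (cobounded ℝ) (𝓝 0) := by
  set D : ℝ → ℝ := fun t => γ ^ 2 * t ^ 2 + (1 - x₀ * t) ^ 2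
  have hcont : ContinuousAt (fun t => π⁻¹ ^ 2 * γ ^ 2 * t ^ 3 * (D t ^ 2)⁻¹) 0 := by
    fun_prop (disch := simp [D])
  have hlim : Tendsto (fun t => π⁻¹ ^ 2 * γ ^ 2 * t ^ 3 * (D t ^ 2)⁻¹) (𝓝 0) (𝓝 0) := by
    simpa using hcont.tendsto
  refine (hlim.comp tendsto_inv₀_cobounded).congr' ?_
  filter_upwards [eventually_ne_cobounded 0, eventually_ne_cobounded x₀] with x hx hx₀
  have hDx : D x⁻¹ = ((x - x₀) ^ 2 + γ ^ 2) / x ^ 2 := by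
    simp only [D]
    field_simp
    ring
  have hpos : 0 < (x - x₀) ^ 2 + (γ : ℝ) ^ 2 := by
    have := sub_ne_zero.2 hx₀
    positivity
  simp only [Function.comp_apply, hDx, cauchyPDFReal_def]
  field_simp

theorem cosAdmissible_cauchyPDFReal (x₀ : ℝ) (γ : ℝ≥0) : COSAdmissible (cauchyPDFReal x₀ γ) := by
  refine cosAdmissible_of_deriv_sign (|x₀| + 1) (integrable_cauchyPDFReal x₀)
    (fun x hx => hasDerivAt_cauchyPDFReal x₀ γ ?_) (fun x hx => ?_) (fun x hx => ?_)
    (tendsto_mul_cauchyPDFReal_sq_cobounded x₀ γ)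
  · rintro rfl
    linarith
  · exact mul_nonpos_of_nonneg_of_nonpos (by positivity)
      (div_nonpos_of_nonpos_of_nonneg (by linarith [le_abs_self x₀]) (by positivity))
  · exact mul_nonneg (by positivity) (div_nonneg (by linarith [neg_abs_le x₀]) (by positivity))

end ProbabilityTheory

theorem stmt_4 (c μ : ℝ) (hc : 0 < c) :
    COSAdmissible (fun x => c / (π * (c ^ 2 + (x - μ) ^ 2))) := by
  have hcauchy : (fun x => c / (π * (c ^ 2 + (x - μ) ^ 2))) =
      ProbabilityTheory.cauchyPDFReal μ c.toNNReal := by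
    ext x
    rw [ProbabilityTheory.cauchyPDFReal_def, Real.coe_toNNReal _ hc.le]
    field_simp
    ring
  rw [hcauchy]
  exact ProbabilityTheory.cosAdmissible_cauchyPDFReal μ _
end

section
/- Let α > 0 and β > 0, and let f be the Pareto density f(x) = α β^α x^{−(α+1)} for x ≥ β and f(x) = 0 for x < β. Then for every L ≥ β, B(L) ≤ β^{2α}/L^{2α+1} + (4α²β^{2α}/(π² L^{2α+1}))·Σ_{k=1}^∞ 1/k², and consequently f is COS-admissible. -/
/-!
On `(L, ∞)` the Pareto density is `α β^α x^(-(α+1))`, and the phase `kπ(x + L)/(2L)` equals `kπ`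
at `x = L`. Hence the zeroth coefficient is the tail mass `β^α L^(-α)`, while for `k ≥ 1` one
integration by parts, whose boundary term vanishes because `sin kπ = 0`, bounds the `k`-th
coefficient by `2α β^α L^(-α) / (kπ)`. Squaring and summing gives the bound on `B(L)`, which is
`O(L^(-(2α+1)))`.
-/

open MeasureTheory Real Filter

/-- The Pareto density with scale `β > 0` and shape `α > 0`. -/
noncomputable def paretoDensity (α β : ℝ) (x : ℝ) : ℝ :=
  if β ≤ x then α * β ^ α * x ^ (-(α + 1)) else 0

open Set Topology

section RpowTail

variable {s a : ℝ}

lemma integrableOn_Ioi_rpow_neg_mul (hs : 1 < s) (ha : 0 < a) {g : ℝ → ℝ} (hg : Continuous g)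
    (hg1 : ∀ x, |g x| ≤ 1) : IntegrableOn (fun x ↦ x ^ (-s) * g x) (Ioi a) :=
  (integrableOn_Ioi_rpow_of_lt (by linarith) ha).mul_bdd hg.aestronglyMeasurable
    (ae_of_all _ hg1)

lemma abs_integral_Ioi_rpow_neg_mul_le (hs : 1 < s) (ha : 0 < a) {g : ℝ → ℝ}
    (hg1 : ∀ x, |g x| ≤ 1) : |∫ x in Ioi a, x ^ (-s) * g x| ≤ a ^ (1 - s) / (s - 1) := by
  have hbound : ∀ᵐ x ∂volume.restrict (Ioi a), ‖x ^ (-s) * g x‖ ≤ x ^ (-s) := by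
    filter_upwards [ae_restrict_mem measurableSet_Ioi] with x hx
    have hx0 : 0 ≤ x ^ (-s) := rpow_nonneg (ha.trans hx).le _
    rw [norm_mul, norm_of_nonneg hx0]
    exact mul_le_of_le_one_right hx0 (hg1 x)
  calc |∫ x in Ioi a, x ^ (-s) * g x|
      ≤ ∫ x in Ioi a, x ^ (-s) := norm_integral_le_of_norm_le
        (integrableOn_Ioi_rpow_of_lt (by linarith) ha) hbound
    _ = a ^ (1 - s) / (s - 1) := by
      rw [integral_Ioi_rpow_of_lt (by linarith) ha, neg_div, ← div_neg, neg_add_eq_sub]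
      ring_nf

lemma integral_Ioi_rpow_neg_mul_cos (hs : 1 < s) (ha : 0 < a) {c : ℝ} (hc : c ≠ 0) (d : ℝ) :
    ∫ x in Ioi a, x ^ (-s) * cos (c * x + d) =
      -(a ^ (-s) * sin (c * a + d)) / c
        + s / c * ∫ x in Ioi a, x ^ (-(s + 1)) * sin (c * x + d) := by
  have hu : ∀ x ∈ Ioi a, HasDerivAt (fun x ↦ x ^ (-s)) (-s * x ^ (-(s + 1))) x := fun x hx ↦ by
    simpa [sub_eq_add_neg, add_comm] using
      hasDerivAt_rpow_const (p := -s) (Or.inl (ha.trans hx).ne')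
  have hv : ∀ x, HasDerivAt (fun x ↦ sin (c * x + d) / c) (cos (c * x + d)) x := fun x ↦ by
    simpa [hc] using (((hasDerivAt_id x).const_mul c).add_const d).sin.div_const c
  have huv : Continuous fun x ↦ sin (c * x + d) / c := by fun_prop
  have hlim_a : Tendsto (fun x ↦ x ^ (-s) * (sin (c * x + d) / c)) (𝓝[>] a)
      (𝓝 (a ^ (-s) * (sin (c * a + d) / c))) :=
    (((continuousAt_rpow_const a _ (Or.inl ha.ne')).mul huv.continuousAt).tendsto).mono_left
      nhdsWithin_le_nhds
  have hlim_top : Tendsto (fun x ↦ x ^ (-s) * (sin (c * x + d) / c)) atTop (𝓝 0) := by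
    have := (tendsto_rpow_neg_atTop (by linarith : 0 < s)).mul_const (1 / |c|)
    rw [zero_mul] at this
    refine squeeze_zero_norm' ?_ this
    filter_upwards [eventually_gt_atTop 0] with x hx
    rw [norm_mul, norm_of_nonneg (rpow_nonneg hx.le _), norm_div, norm_eq_abs, norm_eq_abs]
    exact mul_le_mul_of_nonneg_left (div_le_div_of_nonneg_right (abs_sin_le_one _)
      (abs_nonneg _)) (rpow_nonneg hx.le _)
  have hibp := integral_Ioi_mul_deriv_eq_deriv_mul hu (fun x _ ↦ hv x)
    (integrableOn_Ioi_rpow_neg_mul hs ha (by fun_prop) fun x ↦ abs_cos_le_one _)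
    (by
      have := (integrableOn_Ioi_rpow_neg_mul (s := s + 1) (by linarith) ha
        (g := fun x ↦ sin (c * x + d)) (by fun_prop) fun x ↦ abs_sin_le_one _).const_mul (-s / c)
      exact IntegrableOn.congr_fun this (fun x _ ↦ by simp only [Pi.mul_apply]; ring)
        measurableSet_Ioi)
    hlim_a hlim_top
  have hswap : ∫ x in Ioi a, -s * x ^ (-(s + 1)) * (sin (c * x + d) / c) =
      -(s / c * ∫ x in Ioi a, x ^ (-(s + 1)) * sin (c * x + d)) := by
    rw [← integral_const_mul, ← integral_neg]
    congr 1 with x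
    ring
  rw [hibp, hswap]
  ring

lemma abs_integral_Ioi_rpow_neg_mul_cos_le (hs : 1 < s) (ha : 0 < a) {c : ℝ} (hc : 0 < c)
    (d : ℝ) :
    |∫ x in Ioi a, x ^ (-s) * cos (c * x + d)| ≤ (|sin (c * a + d)| + 1) * a ^ (-s) / c := by
  have hJ := abs_integral_Ioi_rpow_neg_mul_le (s := s + 1) (by linarith) ha
    (g := fun x ↦ sin (c * x + d)) fun x ↦ abs_sin_le_one _
  rw [show 1 - (s + 1) = -s by ring, add_sub_cancel_right] at hJ
  have has : 0 ≤ a ^ (-s) := rpow_nonneg ha.le _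
  rw [integral_Ioi_rpow_neg_mul_cos hs ha hc.ne']
  calc _ ≤ |-(a ^ (-s) * sin (c * a + d)) / c|
        + |s / c * ∫ x in Ioi a, x ^ (-(s + 1)) * sin (c * x + d)| := abs_add_le _ _
    _ ≤ a ^ (-s) * |sin (c * a + d)| / c + s / c * (a ^ (-s) / s) := by
      rw [abs_div, abs_neg, abs_mul, abs_of_nonneg has, abs_of_pos hc, abs_mul,
        abs_of_pos (by positivity : 0 < s / c)]
      gcongr
    _ = (|sin (c * a + d)| + 1) * a ^ (-s) / c := by
      field_simp

end RpowTail

noncomputable def cosCoeff (f : ℝ → ℝ) (L : ℝ) (k : ℕ) : ℝ :=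
  ∫ x in (Icc (-L) L)ᶜ, f x * cos (k * π * (x + L) / (2 * L))

lemma cosB_eq_tsum_cosCoeff (f : ℝ → ℝ) (L : ℝ) :
    cosB f L = ∑' k : ℕ, (1 / L) * |cosCoeff f L k| ^ 2 := rfl

lemma cosB_nonneg (f : ℝ → ℝ) {L : ℝ} (hL : 0 ≤ L) : 0 ≤ cosB f L :=
  tsum_nonneg fun _ ↦ by positivity

lemma cosB_le_of_abs_cosCoeff_le {f : ℝ → ℝ} {L A M : ℝ} (hL : 0 < L)
    (h0 : |cosCoeff f L 0| ≤ A) (hk : ∀ k : ℕ, |cosCoeff f L (k + 1)| ≤ M / (k + 1)) :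
    cosB f L ≤ A ^ 2 / L + M ^ 2 / L * ∑' k : ℕ, 1 / ((k : ℝ) + 1) ^ 2 := by
  set a : ℕ → ℝ := fun k ↦ (1 / L) * |cosCoeff f L k| ^ 2
  have hsq : Summable fun k : ℕ ↦ 1 / ((k : ℝ) + 1) ^ 2 := by
    exact_mod_cast (summable_nat_add_iff 1).2 (summable_one_div_nat_pow.2 one_lt_two)
  have ha0 : a 0 ≤ A ^ 2 / L := by
    rw [div_eq_mul_one_div, mul_comm]
    exact mul_le_mul_of_nonneg_left (pow_le_pow_left₀ (abs_nonneg _) h0 2) (by positivity)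
  have hsucc : ∀ k : ℕ, a (k + 1) ≤ M ^ 2 / L * (1 / ((k : ℝ) + 1) ^ 2) := fun k ↦ by
    calc a (k + 1) ≤ (1 / L) * (M / (k + 1)) ^ 2 :=
          mul_le_mul_of_nonneg_left (pow_le_pow_left₀ (abs_nonneg _) (hk k) 2) (by positivity)
      _ = M ^ 2 / L * (1 / ((k : ℝ) + 1) ^ 2) := by field_simp
  have hsucc_summable : Summable fun k ↦ a (k + 1) :=
    (hsq.mul_left _).of_nonneg_of_le (fun _ ↦ by positivity) hsucc
  calc cosB f L = a 0 + ∑' k, a (k + 1) := by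
        rw [cosB_eq_tsum_cosCoeff]
        exact ((summable_nat_add_iff 1).1 hsucc_summable).tsum_eq_zero_add
    _ ≤ A ^ 2 / L + ∑' k : ℕ, M ^ 2 / L * (1 / ((k : ℝ) + 1) ^ 2) :=
        add_le_add ha0 (hsucc_summable.tsum_le_tsum hsucc (hsq.mul_left _))
    _ = A ^ 2 / L + M ^ 2 / L * ∑' k : ℕ, 1 / ((k : ℝ) + 1) ^ 2 := by rw [tsum_mul_left]

lemma cosAdmissible_of_cosB_le {f g : ℝ → ℝ} (hg : Tendsto g atTop (𝓝 0))
    (hfg : ∀ᶠ L in atTop, cosB f L ≤ g L) : COSAdmissible f :=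
  tendsto_of_tendsto_of_tendsto_of_le_of_le' tendsto_const_nhds hg
    ((eventually_ge_atTop 0).mono fun _ hL ↦ cosB_nonneg f hL) hfg

lemma setIntegral_compl_Icc_eq_Ioi {g : ℝ → ℝ} {L : ℝ} (hg : ∀ x < -L, g x = 0) :
    ∫ x in (Icc (-L) L)ᶜ, g x = ∫ x in Ioi L, g x := by
  refine setIntegral_eq_of_subset_of_ae_sdiff_eq_zero measurableSet_Icc.compl.nullMeasurableSet
    (fun x hx ↦ by simp [hx.out]) (ae_of_all _ fun x ⟨hx, hxL⟩ ↦ hg x ?_)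
  simp only [mem_compl_iff, mem_Icc, not_and_or, not_le, mem_Ioi] at hx hxL
  rcases hx with hx | hx
  · exact hx
  · exact absurd hx hxL

lemma rpow_mul_rpow_neg_sq_div {α β L : ℝ} (hβ : 0 ≤ β) (hL : 0 < L) :
    (β ^ α * L ^ (-α)) ^ 2 / L = β ^ (2 * α) / L ^ (2 * α + 1) := by
  rw [mul_pow, ← rpow_mul_natCast hβ, ← rpow_mul_natCast hL.le, rpow_add_one hL.ne',
    neg_mul, rpow_neg hL.le]
  push_cast
  rw [mul_comm α 2]
  field_simp

section Pareto

variable {α β L : ℝ}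

lemma paretoDensity_of_le {x : ℝ} (h : β ≤ x) :
    paretoDensity α β x = α * β ^ α * x ^ (-(α + 1)) := if_pos h

lemma paretoDensity_of_lt {x : ℝ} (h : x < β) : paretoDensity α β x = 0 := if_neg h.not_ge

lemma cosCoeff_paretoDensity (hβ : 0 < β) (hL : β ≤ L) (k : ℕ) :
    cosCoeff (paretoDensity α β) L k =
      α * β ^ α * ∫ x in Ioi L, x ^ (-(α + 1)) * cos (k * π / (2 * L) * x + k * π / 2) := by
  have hL0 : L ≠ 0 := (hβ.trans_le hL).ne'
  rw [cosCoeff, setIntegral_compl_Icc_eq_Ioi fun x hx ↦ by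
      rw [paretoDensity_of_lt (by linarith), zero_mul], ← integral_const_mul]
  refine setIntegral_congr_fun measurableSet_Ioi fun x hx ↦ ?_
  rw [paretoDensity_of_le (hL.trans hx.out.le), mul_assoc]
  congr 3
  field_simp

lemma cosCoeff_paretoDensity_zero (hα : 0 < α) (hβ : 0 < β) (hL : β ≤ L) :
    cosCoeff (paretoDensity α β) L 0 = β ^ α * L ^ (-α) := by
  rw [cosCoeff_paretoDensity hβ hL]
  simp only [CharP.cast_eq_zero, zero_mul, zero_div, zero_add, cos_zero, mul_one]
  rw [integral_Ioi_rpow_of_lt (by linarith) (hβ.trans_le hL), show -(α + 1) + 1 = -α by ring]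
  field_simp

lemma abs_cosCoeff_paretoDensity_succ_le (hα : 0 < α) (hβ : 0 < β) (hL : β ≤ L) (k : ℕ) :
    |cosCoeff (paretoDensity α β) L (k + 1)| ≤ 2 * α / π * (β ^ α * L ^ (-α)) / (k + 1) := by
  have hL0 : 0 < L := hβ.trans_le hL
  set c : ℝ := ((k + 1 : ℕ) : ℝ) * π / (2 * L)
  set d : ℝ := ((k + 1 : ℕ) : ℝ) * π / 2
  have hc : 0 < c := by positivity
  have hsin : sin (c * L + d) = 0 := by
    rw [show c * L + d = ((k + 1 : ℕ) : ℝ) * π by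
      simp only [c, d]; field_simp; ring]
    exact sin_nat_mul_pi _
  rw [cosCoeff_paretoDensity hβ hL, abs_mul, abs_of_pos (by positivity)]
  calc _ ≤ α * β ^ α * ((|sin (c * L + d)| + 1) * L ^ (-(α + 1)) / c) := by
        gcongr
        exact abs_integral_Ioi_rpow_neg_mul_cos_le (by linarith) hL0 hc _
    _ = 2 * α / π * (β ^ α * L ^ (-α)) / (k + 1) := by
      rw [hsin, abs_zero, neg_add, rpow_add hL0, rpow_neg_one]
      push_cast [c]
      field_simp
      ring

end Pareto

theorem stmt_6 (α β : ℝ) (hα : 0 < α) (hβ : 0 < β) :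
    (∀ L : ℝ, β ≤ L →
      cosB (paretoDensity α β) L ≤
        β ^ (2 * α) / L ^ (2 * α + 1) +
          (4 * α ^ 2 * β ^ (2 * α) / (π ^ 2 * L ^ (2 * α + 1))) *
            ∑' k : ℕ, 1 / ((k : ℝ) + 1) ^ 2) ∧
    COSAdmissible (paretoDensity α β) := by
  have hbound : ∀ L : ℝ, β ≤ L → cosB (paretoDensity α β) L ≤
      β ^ (2 * α) / L ^ (2 * α + 1) + (4 * α ^ 2 * β ^ (2 * α) / (π ^ 2 * L ^ (2 * α + 1))) *
        ∑' k : ℕ, 1 / ((k : ℝ) + 1) ^ 2 := fun L hL ↦ by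
    have hL0 : 0 < L := hβ.trans_le hL
    convert cosB_le_of_abs_cosCoeff_le hL0
      (congrArg abs (cosCoeff_paretoDensity_zero hα hβ hL)).le
      (abs_cosCoeff_paretoDensity_succ_le hα hβ hL) using 2
    · rw [sq_abs, rpow_mul_rpow_neg_sq_div hβ.le hL0]
    · rw [mul_pow, mul_div_assoc ((2 * α / π) ^ 2), rpow_mul_rpow_neg_sq_div hβ.le hL0]
      field_simp
      norm_num
  refine ⟨hbound, cosAdmissible_of_cosB_le ?_ (eventually_ge_atTop β |>.mono hbound)⟩
  have hpow : Tendsto (fun L : ℝ ↦ L ^ (2 * α + 1)) atTop atTop := tendsto_rpow_atTop (by positivity)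
  simpa using (tendsto_const_nhds.div_atTop hpow).add
    ((tendsto_const_nhds.div_atTop (hpow.const_mul_atTop (by positivity))).mul_const _)
end
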